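/- arXiv:1504.02644 — 2 statements merged into one kernel-verified Lean document; each statement's English description precedes it below -/
import Mathlib

section
/- Let T be a random variable with values in the positive integers, let b > 0 be a real number, and suppose Pr[T ≤ i] ≤ (λ+1)^i · 2^{-n} for all natural numbers i, where λ ≥ 1 is an integer. Then E[T] ≥ n / log₂(λ+1) - 2. -/
open MeasureTheory ENNReal Finset

/-! With `m = ⌊n / log₂ (L + 1)⌋`, the geometric sum `∑_{i<m} (L+1)^i` is at most
`(L+1)^m ≤ 2^n`, so the hypothesis gives `∑_{i<m} P[T ≤ i] ≤ 1`. Hence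
`E[T] ≥ ∑_{i<m} P[T > i] ≥ m - 1 ≥ n / log₂ (L + 1) - 2`. -/

theorem Real.pow_floor_div_logb_le {a : ℝ} (ha : 1 < a) (n : ℕ) :
    a ^ ⌊(n : ℝ) / Real.logb 2 a⌋₊ ≤ 2 ^ n := by
  have hc : 0 < Real.logb 2 a := Real.logb_pos one_lt_two ha
  have hm : (⌊(n : ℝ) / Real.logb 2 a⌋₊ : ℝ) * Real.logb 2 a ≤ n :=
    (le_div_iff₀ hc).1 (Nat.floor_le (by positivity))
  calc a ^ ⌊(n : ℝ) / Real.logb 2 a⌋₊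
      = (2 : ℝ) ^ (Real.logb 2 a * ⌊(n : ℝ) / Real.logb 2 a⌋₊) := by
        rw [Real.rpow_mul zero_le_two, Real.rpow_logb two_pos (by norm_num) (by linarith),
          Real.rpow_natCast]
    _ ≤ (2 : ℝ) ^ (n : ℝ) := Real.rpow_le_rpow_of_exponent_le one_le_two (by linarith)
    _ = 2 ^ n := Real.rpow_natCast 2 n

theorem ENNReal.sum_range_le_one_of_le_pow_div {p : ℕ → ℝ≥0∞} {a n m : ℕ} (ha : 2 ≤ a)
    (ham : a ^ m ≤ 2 ^ n) (hp : ∀ i, p i ≤ (a : ℝ≥0∞) ^ i / 2 ^ n) :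
    ∑ i ∈ range m, p i ≤ 1 := by
  have hgeom : ∑ i ∈ range m, a ^ i ≤ 2 ^ n :=
    (Nat.geomSum_lt ha fun _ hi => mem_range.1 hi).le.trans ham
  calc ∑ i ∈ range m, p i ≤ ∑ i ∈ range m, (a : ℝ≥0∞) ^ i / 2 ^ n :=
        sum_le_sum fun i _ => hp i
    _ = ((∑ i ∈ range m, a ^ i : ℕ) : ℝ≥0∞) / 2 ^ n := by
        push_cast; simp only [div_eq_mul_inv, sum_mul]
    _ ≤ 1 := ENNReal.div_le_of_le_mul (by rw [one_mul]; exact_mod_cast hgeom)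

theorem sum_range_indicator_lt_le {Ω : Type*} (T : Ω → ℕ) (m : ℕ) (ω : Ω) :
    ∑ i ∈ range m, {ω | i < T ω}.indicator (1 : Ω → ℝ≥0∞) ω ≤ T ω := by
  simp only [Set.indicator_apply, Set.mem_ofPred_eq, Pi.one_apply, sum_boole]
  exact_mod_cast (card_le_card fun i hi => mem_range.2 (mem_filter.1 hi).2).trans_eq
    (card_range (T ω))

section

variable {Ω : Type*} [MeasurableSpace Ω] (μ : Measure Ω) [IsProbabilityMeasure μ]

theorem sum_one_sub_measure_le_lintegral (T : Ω → ℕ) (m : ℕ) :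
    ∑ i ∈ range m, (1 - μ {ω | T ω ≤ i}) ≤ ∫⁻ ω, (T ω : ℝ≥0∞) ∂μ := by
  -- `T` need not be measurable: the complements of the measurable hulls of `{T ≤ i}` are
  -- measurable subsets of `{i < T}` of measure `1 - μ {T ≤ i}`.
  set s : ℕ → Set Ω := fun i => (toMeasurable μ {ω | T ω ≤ i})ᶜ
  have hs : ∀ i, MeasurableSet (s i) := fun i => (measurableSet_toMeasurable _ _).compl
  have hsT : ∀ i, s i ⊆ {ω | i < T ω} := fun i ω hω =>
    show i < T ω from lt_of_not_ge fun hle => hω (subset_toMeasurable μ _ hle)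
  calc ∑ i ∈ range m, (1 - μ {ω | T ω ≤ i}) = ∑ i ∈ range m, μ (s i) := by
        refine sum_congr rfl fun i _ => ?_
        rw [prob_compl_eq_one_sub (measurableSet_toMeasurable _ _), measure_toMeasurable]
    _ = ∫⁻ ω, ∑ i ∈ range m, (s i).indicator 1 ω ∂μ := by
        rw [lintegral_finsetSum _ fun i _ => measurable_one.indicator (hs i)]
        exact sum_congr rfl fun i _ => (lintegral_indicator_one (hs i)).symm
    _ ≤ ∫⁻ ω, (T ω : ℝ≥0∞) ∂μ := lintegral_mono fun ω =>
        (sum_le_sum fun i _ =>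
          Set.indicator_le_indicator_of_subset (hsT i) (fun _ => zero_le) ω).trans
            (sum_range_indicator_lt_le T m ω)

theorem sub_one_le_lintegral_of_sum_measure_le_one (T : Ω → ℕ) {m : ℕ}
    (hsum : ∑ i ∈ range m, μ {ω | T ω ≤ i} ≤ 1) :
    (m : ℝ≥0∞) - 1 ≤ ∫⁻ ω, (T ω : ℝ≥0∞) ∂μ := by
  refine le_trans ?_ (sum_one_sub_measure_le_lintegral μ T m)
  rw [tsub_le_iff_right]
  calc (m : ℝ≥0∞) = ∑ i ∈ range m, ((1 - μ {ω | T ω ≤ i}) + μ {ω | T ω ≤ i}) := by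
        simp only [tsub_add_cancel_of_le prob_le_one, sum_const, card_range, nsmul_one]
    _ ≤ ∑ i ∈ range m, (1 - μ {ω | T ω ≤ i}) + 1 := by
        rw [sum_add_distrib]; gcongr

end

theorem stmt_2_general {Ω : Type*} [MeasurableSpace Ω] (μ : Measure Ω) [IsProbabilityMeasure μ]
    (n L : ℕ) (hL : 1 ≤ L)
    (T : Ω → ℕ)
    (h : ∀ i : ℕ, μ {ω | T ω ≤ i} ≤ ((L : ℝ≥0∞) + 1) ^ i / 2 ^ n) :
    ENNReal.ofReal ((n : ℝ) / Real.logb 2 ((L : ℝ) + 1) - 2) ≤ ∫⁻ ω, (T ω : ℝ≥0∞) ∂μ := by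
  set m := ⌊(n : ℝ) / Real.logb 2 ((L : ℝ) + 1)⌋₊
  have hpow : ((L : ℝ) + 1) ^ m ≤ 2 ^ n :=
    Real.pow_floor_div_logb_le (by norm_cast; omega) n
  have hsum : ∑ i ∈ range m, μ {ω | T ω ≤ i} ≤ 1 :=
    ENNReal.sum_range_le_one_of_le_pow_div (a := L + 1) (by omega) (by exact_mod_cast hpow)
      (by exact_mod_cast h)
  refine le_trans ?_ (sub_one_le_lintegral_of_sum_measure_le_one μ T hsum)
  have hm : (n : ℝ) / Real.logb 2 ((L : ℝ) + 1) - 2 ≤ m - 1 := by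
    linarith [Nat.lt_floor_add_one ((n : ℝ) / Real.logb 2 ((L : ℝ) + 1))]
  calc ENNReal.ofReal ((n : ℝ) / Real.logb 2 ((L : ℝ) + 1) - 2) ≤ ENNReal.ofReal (m - 1) :=
        ENNReal.ofReal_le_ofReal hm
    _ = (m : ℝ≥0∞) - 1 := by rw [ENNReal.ofReal_sub _ zero_le_one]; simp

theorem stmt_2 {Ω : Type*} [MeasurableSpace Ω] (μ : Measure Ω) [IsProbabilityMeasure μ]
    (n L : ℕ) (hL : 1 ≤ L) (b : ℝ) (hb : 0 < b)
    (T : Ω → ℕ) (hT : ∀ ω, 1 ≤ T ω)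
    (h : ∀ i : ℕ, μ {ω | T ω ≤ i} ≤ ((L : ℝ≥0∞) + 1) ^ i / 2 ^ n) :
    ENNReal.ofReal ((n : ℝ) / Real.logb 2 ((L : ℝ) + 1) - 2) ≤ ∫⁻ ω, (T ω : ℝ≥0∞) ∂μ :=
  stmt_2_general μ n L hL T h
end

section
/- Let n be a positive integer and define OM_z: {0,1}^n → ℕ by OM_z(x) = number of positions i with x_i = z_i. The deterministic (2+1) strategy which maintains two strings x_i, x_i' agreeing with z on the first i bits, being zero on bits i+2,...,n, and differing on bit i+1, and in each step flips bits i and i+1 of the less fit string, finds z within n+1 function evaluations. -/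
/-- `OM z x` is the generalized OneMax value: the number of positions where `x` agrees with `z`. -/
def OM {n : ℕ} (z x : Fin n → Bool) : ℕ :=
  (Finset.univ.filter fun i : Fin n => x i = z i).card

/-- Flip the bits at (0-indexed) positions `t` and `t+1` (no-op at out-of-range positions). -/
def flipPair {n : ℕ} (t : ℕ) (y : Fin n → Bool) : Fin n → Bool :=
  fun i => if (i : ℕ) = t ∨ (i : ℕ) = t + 1 then !(y i) else y i

/-- One step of the (2+1) strategy at iteration `t`: flip bits `t` and `t+1` of the
less fit of the two stored strings. -/
def step21 {n : ℕ} (z : Fin n → Bool) (t : ℕ)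
    (p : (Fin n → Bool) × (Fin n → Bool)) : (Fin n → Bool) × (Fin n → Bool) :=
  if OM z p.2 ≤ OM z p.1 then (p.1, flipPair t p.2) else (flipPair t p.1, p.2)

/-- The state of the (2+1) strategy after `t` steps, starting from the all-zeros
string and the string with a single one in the first position. -/
def run21 {n : ℕ} (z : Fin n → Bool) : ℕ → (Fin n → Bool) × (Fin n → Bool)
  | 0 => (fun _ => false, fun i => decide ((i : ℕ) = 0))
  | t + 1 => step21 z t (run21 z t)

lemma OM_split {n : ℕ} (z x : Fin n → Bool) (j : Fin n) :
    OM z x = (if x j = z j then 1 else 0) +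
      ∑ i ∈ Finset.univ.erase j, (if x i = z i then (1:ℕ) else 0) := by
  rw [OM, Finset.card_filter, ← Finset.add_sum_erase _ _ (Finset.mem_univ j)]

lemma OM_lt {n : ℕ} (z a b : Fin n → Bool) (j : Fin n)
    (hab : ∀ i, i ≠ j → a i = b i) (ha : a j = z j) (hb : b j ≠ z j) :
    OM z b < OM z a := by
  rw [OM_split z a j, OM_split z b j]
  have hs : ∑ i ∈ Finset.univ.erase j, (if b i = z i then (1:ℕ) else 0)
      = ∑ i ∈ Finset.univ.erase j, (if a i = z i then (1:ℕ) else 0) := by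
    apply Finset.sum_congr rfl
    intro i hi
    rw [hab i (Finset.ne_of_mem_erase hi)]
  rw [hs, if_pos ha, if_neg hb]
  omega

/-- Properties of flipping the less-fit string `w` (wrong at position `t`), keeping `c`. -/
lemma flip_inv {n t : ℕ} (ht : t < n) (z c w : Fin n → Bool)
    (h1 : ∀ i : Fin n, (i:ℕ) < t → c i = z i ∧ w i = z i)
    (h2 : ∀ i : Fin n, t < (i:ℕ) → c i = false ∧ w i = false)
    (hc : c ⟨t, ht⟩ = z ⟨t, ht⟩) (hw : w ⟨t, ht⟩ ≠ z ⟨t, ht⟩) :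
    (∀ i : Fin n, (i:ℕ) < t + 1 → c i = z i ∧ flipPair t w i = z i) ∧
    (∀ i : Fin n, t + 1 < (i:ℕ) → c i = false ∧ flipPair t w i = false) ∧
    (∀ i : Fin n, (i:ℕ) = t + 1 → c i ≠ flipPair t w i) := by
  have hbool : ∀ x y : Bool, ¬ (x = y) → (!x) = y := by
    intro x y h; cases x <;> cases y <;> simp_all
  refine ⟨fun i hi => ?_, fun i hi => ?_, fun i hi => ?_⟩
  · rcases Nat.lt_or_ge (i:ℕ) t with h | h
    · have := h1 i h
      refine ⟨this.1, ?_⟩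
      simp only [flipPair]
      rw [if_neg (by omega), this.2]
    · have hit : (i:ℕ) = t := by omega
      have : i = ⟨t, ht⟩ := Fin.ext hit
      subst this
      refine ⟨hc, ?_⟩
      simpa [flipPair] using hbool _ _ hw
  · have := h2 i (by omega)
    refine ⟨this.1, ?_⟩
    simp only [flipPair]
    rw [if_neg (by omega), this.2]
  · have := h2 i (by omega)
    simp only [flipPair]
    rw [if_pos (Or.inr hi), this.1, this.2]
    decide

lemma step21_inv {n t : ℕ} (ht : t < n) (z : Fin n → Bool)
    (p : (Fin n → Bool) × (Fin n → Bool))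
    (h1 : ∀ i : Fin n, (i:ℕ) < t → p.1 i = z i ∧ p.2 i = z i)
    (h2 : ∀ i : Fin n, t < (i:ℕ) → p.1 i = false ∧ p.2 i = false)
    (h3 : ∀ i : Fin n, (i:ℕ) = t → p.1 i ≠ p.2 i) :
    (∀ i : Fin n, (i:ℕ) < t + 1 →
        (step21 z t p).1 i = z i ∧ (step21 z t p).2 i = z i) ∧
    (∀ i : Fin n, t + 1 < (i:ℕ) →
        (step21 z t p).1 i = false ∧ (step21 z t p).2 i = false) ∧
    (∀ i : Fin n, (i:ℕ) = t + 1 → (step21 z t p).1 i ≠ (step21 z t p).2 i) := by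
  set j : Fin n := ⟨t, ht⟩ with hj
  have hab : ∀ i, i ≠ j → p.1 i = p.2 i := by
    intro i hij
    have hijn : (i:ℕ) ≠ t := fun h => hij (Fin.ext h)
    rcases Nat.lt_or_ge (i:ℕ) t with h | h
    · rw [(h1 i h).1, (h1 i h).2]
    · have : t < (i:ℕ) := by omega
      rw [(h2 i this).1, (h2 i this).2]
  have hne : p.1 j ≠ p.2 j := h3 j rfl
  by_cases hc : p.1 j = z j
  · have hw : p.2 j ≠ z j := fun h => hne (hc.trans h.symm)
    have hlt : OM z p.2 < OM z p.1 := OM_lt z p.1 p.2 j hab hc hw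
    have hstep : step21 z t p = (p.1, flipPair t p.2) := by
      rw [step21, if_pos (Nat.le_of_lt hlt)]
    rw [hstep]
    exact flip_inv ht z p.1 p.2 h1 h2 hc hw
  · have hw : p.2 j = z j := by
      revert hne hc; cases p.1 j <;> cases p.2 j <;> cases z j <;> simp_all
    have hlt : OM z p.1 < OM z p.2 :=
      OM_lt z p.2 p.1 j (fun i hi => (hab i hi).symm) hw hc
    have hstep : step21 z t p = (flipPair t p.1, p.2) := by
      rw [step21, if_neg (by omega)]
    rw [hstep]
    have := flip_inv ht z p.2 p.1
      (fun i hi => ⟨(h1 i hi).2, (h1 i hi).1⟩)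
      (fun i hi => ⟨(h2 i hi).2, (h2 i hi).1⟩) hw hc
    exact ⟨fun i hi => ⟨(this.1 i hi).2, (this.1 i hi).1⟩,
      fun i hi => ⟨(this.2.1 i hi).2, (this.2.1 i hi).1⟩,
      fun i hi => fun h => this.2.2 i hi h.symm⟩

/-- The deterministic (2+1) elitist strategy finds the target string `z` after `n` steps,
i.e., within `n + 1` function evaluations. -/
theorem stmt_17 (n : ℕ) (z : Fin n → Bool) :
    (run21 z n).1 = z ∧ (run21 z n).2 = z := by
  suffices h : ∀ t, t ≤ n →
      (∀ i : Fin n, (i:ℕ) < t → (run21 z t).1 i = z i ∧ (run21 z t).2 i = z i) ∧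
      (∀ i : Fin n, t < (i:ℕ) → (run21 z t).1 i = false ∧ (run21 z t).2 i = false) ∧
      (∀ i : Fin n, (i:ℕ) = t → (run21 z t).1 i ≠ (run21 z t).2 i) by
    obtain ⟨h1, -, -⟩ := h n le_rfl
    exact ⟨funext fun i => (h1 i i.isLt).1, funext fun i => (h1 i i.isLt).2⟩
  intro t
  induction t with
  | zero =>
    intro _
    refine ⟨fun i hi => absurd hi (by omega), fun i hi => ?_, fun i hi => ?_⟩
    · exact ⟨rfl, by simp [run21]; omega⟩
    · simp [run21, hi]
  | succ t ih =>
    intro htn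
    have ht : t < n := htn
    obtain ⟨h1, h2, h3⟩ := ih (Nat.le_of_lt ht)
    exact step21_inv ht z (run21 z t) h1 h2 h3
end
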